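/- Define the linear map M: H_n → H_n by M(X) = X - Λ_∘^{1/2} [∫ (G Ψ G*/(G*Λ_∘G)) · (G*XG/(G*Λ_∘G))] Λ_∘^{1/2}, where Λ_∘ > 0 satisfies ∫ G(Ψ/(G*Λ_∘G))G* = I. Then tr(M(X)) = 0 for every Hermitian X. -/

import Mathlib

open Matrix MeasureTheory Real Filter
open scoped ComplexOrder

noncomputable section

abbrev Mat (n : ℕ) := Matrix (Fin n) (Fin n) ℂ
abbrev Vec (n : ℕ) := Matrix (Fin n) (Fin 1) ℂ

/-- the point e^{jθ} on the unit circle -/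
def circPt (θ : ℝ) : ℂ := Complex.exp (θ * Complex.I)

/-- G(e^{jθ}) = (e^{jθ} I - A)⁻¹ B -/
def Gm {n : ℕ} (A : Mat n) (B : Vec n) (θ : ℝ) : Vec n :=
  (circPt θ • (1 : Mat n) - A)⁻¹ * B

/-- the scalar G* Λ G at e^{jθ} -/
def quad {n : ℕ} (A : Mat n) (B : Vec n) (Λ : Mat n) (θ : ℝ) : ℂ :=
  ((Gm A B θ)ᴴ * Λ * Gm A B θ) 0 0

/-- normalized entrywise matrix integral over the unit circle -/
def mInt {n : ℕ} (f : ℝ → Mat n) : Mat n :=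
  Matrix.of fun i j => (1 / (2 * π) : ℝ) • ∫ θ in (0:ℝ)..(2 * π), f θ i j

/-- normalized scalar (complex) integral over the unit circle -/
def sInt (f : ℝ → ℂ) : ℂ := (1 / (2 * π) : ℝ) • ∫ θ in (0:ℝ)..(2 * π), f θ

/-- normalized scalar (real) integral over the unit circle -/
def sIntR (f : ℝ → ℝ) : ℝ := (1 / (2 * π)) * ∫ θ in (0:ℝ)..(2 * π), f θ

/-- all eigenvalues of A lie in the open unit disc -/
def IsStable {n : ℕ} (A : Mat n) : Prop := ∀ μ ∈ spectrum ℂ A, ‖μ‖ < 1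

/-- (A,B) is a reachable pair: the controllability matrix has full rank -/
def Reachable {n : ℕ} (A : Mat n) (B : Vec n) : Prop :=
  (Matrix.of fun (i : Fin n) (k : Fin n) => (A ^ (k : ℕ) * B) i 0).rank = n

open scoped Classical in
/-- positive semidefinite square root (junk value 0 off the psd cone) -/
def msqrt {n : ℕ} (M : Mat n) : Mat n :=
  if h : M.PosSemidef then
    h.1.eigenvectorUnitary.1 * diagonal ((↑) ∘ (√·) ∘ h.1.eigenvalues) *
      (star h.1.eigenvectorUnitary : Mat n) else 0

/-- the moment map ∫ G (Ψ/(G*ΛG)) G* -/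
def moment {n : ℕ} (A : Mat n) (B : Vec n) (Ψ : ℝ → ℝ) (Λ : Mat n) : Mat n :=
  mInt (fun θ => ((Ψ θ : ℂ) / quad A B Λ θ) • (Gm A B θ * (Gm A B θ)ᴴ))

/-- the iteration map Θ(Λ) = ∫ Λ^{1/2} G (Ψ/(G*ΛG)) G* Λ^{1/2} -/
def Theta {n : ℕ} (A : Mat n) (B : Vec n) (Ψ : ℝ → ℝ) (Λ : Mat n) : Mat n :=
  mInt (fun θ => ((Ψ θ : ℂ) / quad A B Λ θ) •
    (msqrt Λ * (Gm A B θ * (Gm A B θ)ᴴ) * msqrt Λ))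

/-- the linearization M of Θ at Λ:
M(X) = X - Λ^{1/2} ∫ (GΨG*/(G*ΛG)) (G*XG/(G*ΛG)) Λ^{1/2} -/
def Mlin {n : ℕ} (A : Mat n) (B : Vec n) (Ψ : ℝ → ℝ) (Λ : Mat n) (X : Mat n) : Mat n :=
  X - msqrt Λ * mInt (fun θ =>
    (((Ψ θ : ℂ) * (((Gm A B θ)ᴴ * X * Gm A B θ) 0 0)) / (quad A B Λ θ) ^ 2) •
      (Gm A B θ * (Gm A B θ)ᴴ)) * msqrt Λ

/-- the range of the operator Γ : Φ ↦ ∫ G Φ G* on continuous (2π-periodic) functions -/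
def RangeGamma {n : ℕ} (A : Mat n) (B : Vec n) : Set (Mat n) :=
  {M | ∃ Φ : ℝ → ℝ, Continuous Φ ∧ (∀ θ, Φ (θ + 2 * π) = Φ θ) ∧
    M = mInt (fun θ => (Φ θ : ℂ) • (Gm A B θ * (Gm A B θ)ᴴ))}

/-! At a fixed point, `Λ^{1/2} Λ^{1/2} = Λ` and `tr (G G* Y) = G* Y G` turn the trace of the
correction term into `∫ Ψ (G*XG)(G*ΛG)/(G*ΛG)² = ∫ Ψ G*XG/(G*ΛG)`, which is
`tr ((∫ G Ψ/(G*ΛG) G*) X) = tr X` by the moment condition. -/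

lemma IsStable.det_smul_one_sub_ne_zero {n : ℕ} {A : Mat n} (hA : IsStable A) {z : ℂ}
    (hz : ‖z‖ = 1) : (z • (1 : Mat n) - A).det ≠ 0 := by
  intro h
  have hmem : z ∈ spectrum ℂ A := by
    rw [mem_spectrum_iff_not_isUnit_eval_charpoly, eval_charpoly, scalar_apply,
      ← smul_one_eq_diagonal, h]
    exact not_isUnit_zero
  exact (hA z hmem).ne hz

lemma continuous_Gm {n : ℕ} {A : Mat n} (B : Vec n) (hA : IsStable A) :
    Continuous (Gm A B) := by
  have hres : Continuous fun θ : ℝ => circPt θ • (1 : Mat n) - A := by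
    unfold circPt; fun_prop
  refine Continuous.matrix_mul (continuous_iff_continuousAt.2 fun θ => ?_) continuous_const
  refine ContinuousAt.comp (g := Inv.inv) (continuousAt_matrix_inv _ ?_) hres.continuousAt
  rw [Ring.inverse_eq_inv']
  exact continuousAt_inv₀ (hA.det_smul_one_sub_ne_zero (Complex.norm_exp_ofReal_mul_I θ))

lemma continuous_quad {n : ℕ} {A : Mat n} (B : Vec n) (hA : IsStable A) (Λ : Mat n) :
    Continuous (quad A B Λ) := by
  have hG := continuous_Gm B hA
  exact ((hG.matrix_conjTranspose.matrix_mul continuous_const).matrix_mul hG).matrix_elem 0 0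

lemma Mlin_eq {n : ℕ} (A : Mat n) (B : Vec n) (Ψ : ℝ → ℝ) (Λ X : Mat n) :
    Mlin A B Ψ Λ X = X - msqrt Λ * mInt (fun θ =>
      ((Ψ θ : ℂ) * quad A B X θ / quad A B Λ θ ^ 2) • (Gm A B θ * (Gm A B θ)ᴴ)) * msqrt Λ :=
  rfl

lemma msqrt_mul_self {n : ℕ} {M : Mat n} (hM : M.PosSemidef) : msqrt M * msqrt M = M := by
  set U := hM.1.eigenvectorUnitary
  set D : Mat n := diagonal ((↑) ∘ (√·) ∘ hM.1.eigenvalues)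
  have hU : (star U : Mat n) * (U : Mat n) = 1 := U.2.1
  have hD : D * D = diagonal ((↑) ∘ hM.1.eigenvalues) := by
    rw [diagonal_mul_diagonal]
    congr 1; funext i
    simp [← Complex.ofReal_mul, Real.mul_self_sqrt (hM.eigenvalues_nonneg i)]
  calc msqrt M * msqrt M = (U : Mat n) * (D * ((star U : Mat n) * U) * D) * (star U : Mat n) := by
        simp only [msqrt, dif_pos hM, Matrix.mul_assoc]; rfl
    _ = M := by
        rw [hU, Matrix.mul_one, hD]
        conv_rhs => rw [hM.1.spectral_theorem]
        rfl

lemma trace_Gm_mul_conjTranspose_mul {n : ℕ} (A : Mat n) (B : Vec n) (Y : Mat n) (θ : ℝ) :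
    (Gm A B θ * (Gm A B θ)ᴴ * Y).trace = quad A B Y θ := by
  rw [Matrix.mul_assoc, trace_mul_comm, trace_fin_one, quad, Matrix.mul_assoc]

lemma trace_mInt_mul {n : ℕ} {f : ℝ → Mat n} (C : Mat n)
    (hf : ∀ i j, IntervalIntegrable (fun θ => f θ i j) volume 0 (2 * π)) :
    (mInt f * C).trace = sInt fun θ => (f θ * C).trace := by
  have hfC : ∀ i j, IntervalIntegrable (fun θ => f θ i j * C j i) volume 0 (2 * π) :=
    fun i j => (hf i j).mul_const _
  simp only [mInt, sInt, trace, diag, mul_apply, of_apply, smul_mul_assoc,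
    ← intervalIntegral.integral_mul_const, ← Finset.smul_sum]
  have hrow : ∀ i, IntervalIntegrable (fun θ => ∑ j, f θ i j * C j i) volume 0 (2 * π) :=
    fun i => by simpa only [Finset.sum_fn] using IntervalIntegrable.sum _ fun j _ => hfC i j
  rw [intervalIntegral.integral_finsetSum fun i _ => hrow i]
  simp_rw [intervalIntegral.integral_finsetSum fun j _ => hfC _ j]

lemma intervalIntegrable_smul_Gm_mul_conjTranspose {n : ℕ} {A : Mat n} (B : Vec n)
    (hA : IsStable A) {c : ℝ → ℂ} (hc : Continuous c) (i j : Fin n) :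
    IntervalIntegrable (fun θ => (c θ • (Gm A B θ * (Gm A B θ)ᴴ)) i j) volume 0 (2 * π) :=
  have hG := continuous_Gm B hA
  ((hc.smul (hG.matrix_mul hG.matrix_conjTranspose)).matrix_elem i j).intervalIntegrable _ _

theorem stmt10_general {n : ℕ} (A : Mat n) (B : Vec n) (Ψ : ℝ → ℝ) (Λ : Mat n)
    (hA : IsStable A)
    (hΨc : Continuous Ψ)
    (hΛ : Λ.PosDef)
    (hq : ∀ θ, 0 < (quad A B Λ θ).re)
    (hmom : moment A B Ψ Λ = 1) :
    ∀ X : Mat n, X.IsHermitian → (Mlin A B Ψ Λ X).trace = 0 := by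
  intro X _
  have hqne : ∀ θ, quad A B Λ θ ≠ 0 := fun θ h => by simpa [h] using hq θ
  have hΨ : Continuous fun θ => (Ψ θ : ℂ) := Complex.continuous_ofReal.comp hΨc
  have hqΛ := continuous_quad B hA Λ
  have hc₁ : Continuous fun θ => (Ψ θ : ℂ) / quad A B Λ θ := hΨ.div hqΛ hqne
  have hc₂ : Continuous fun θ => (Ψ θ : ℂ) * quad A B X θ / quad A B Λ θ ^ 2 :=
    (hΨ.mul (continuous_quad B hA X)).div (hqΛ.pow 2) fun θ => pow_ne_zero 2 (hqne θ)
  rw [Mlin_eq, trace_sub, trace_mul_cycle, msqrt_mul_self hΛ.posSemidef, trace_mul_comm,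
    sub_eq_zero]
  conv_lhs => rw [← one_mul X, ← hmom, moment]
  rw [trace_mInt_mul X (intervalIntegrable_smul_Gm_mul_conjTranspose B hA hc₁),
    trace_mInt_mul Λ (intervalIntegrable_smul_Gm_mul_conjTranspose B hA hc₂)]
  congr 1
  funext θ
  simp only [smul_mul, trace_smul, trace_Gm_mul_conjTranspose_mul, smul_eq_mul]
  field_simp [hqne θ]

/-- the linearization M of Θ at a fixed point Λ∘ > 0 is trace
annihilating: tr M(X) = 0 for every Hermitian X. -/
theorem stmt10 {n : ℕ} (A : Mat n) (B : Vec n) (Ψ : ℝ → ℝ) (Λ : Mat n)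
    (hA : IsStable A) (hR : Reachable A B)
    (hΨc : Continuous Ψ) (hΨpos : ∀ θ, 0 < Ψ θ)
    (hΛ : Λ.PosDef)
    (hq : ∀ θ, 0 < (quad A B Λ θ).re)
    (hmom : moment A B Ψ Λ = 1) :
    ∀ X : Mat n, X.IsHermitian → (Mlin A B Ψ Λ X).trace = 0 :=
  stmt10_general A B Ψ Λ hA hΨc hΛ hq hmom
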